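/- arXiv:2201.03619 — 9 statements merged into one kernel-verified Lean document; each statement's English description precedes it below -/
import Mathlib

section
/- Let s_0 < 0 and K > 0, and let Z : [s_0, 0) → ℝ be a differentiable function satisfying the differential inequality Z'(s) ≤ 2(Z(s) + s + 2K + 1)/s for every s ∈ [s_0, 0). Then there exists s ∈ [s_0, 0) with Z(s) < 0. (Equivalently: Z cannot remain nonnegative on all of [s_0, 0), since by comparison Z(s) ≤ −2K − 1 − 2s + C s² with C = (Z(s_0) + 2K + 1 + 2s_0)/s_0², and this bound tends to −2K − 1 < 0 as s → 0⁻.) -/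
/-! With `u s = Z s + 2 s + 2K + 1` the inequality reads `u' ≤ 2 u / s`, i.e. `u / s²` is
nonincreasing. Hence `Z s ≤ C s² - 2 s - (2K + 1)` with `C = u s₀ / s₀²`, and the right-hand
side tends to `-(2K + 1) < 0` as `s → 0⁻`. -/

open Set Filter Topology

/-- The sign of `s` plays no role: multiplying `u' ≤ 2 u / s` by `s² > 0` gives
`u' s² - 2 s u ≤ 0`, the numerator of `(u / s²)'`. -/
theorem antitoneOn_div_sq_of_deriv_le {D : Set ℝ} (hD : Convex ℝ D) (h0 : (0 : ℝ) ∉ D)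
    {u u' : ℝ → ℝ} (hu : ∀ s ∈ D, HasDerivWithinAt u (u' s) D s)
    (hineq : ∀ s ∈ D, u' s ≤ 2 * u s / s) :
    AntitoneOn (fun s => u s / s ^ 2) D := by
  have hne : ∀ s ∈ D, s ≠ 0 := fun s hs h => h0 (h ▸ hs)
  refine antitoneOn_of_hasDerivWithinAt_nonpos hD
    (f' := fun s => (u' s * s ^ 2 - u s * (2 * s)) / (s ^ 2) ^ 2) ?_ ?_ ?_
  · exact ContinuousOn.div (fun s hs => (hu s hs).continuousWithinAt) (continuousOn_pow 2)
      fun s hs => pow_ne_zero 2 (hne s hs)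
  · intro s hs
    have hsD := interior_subset hs
    have hsq : HasDerivAt (fun x : ℝ => x ^ 2) (2 * s) s := by simpa using hasDerivAt_pow 2 s
    exact ((hu s hsD).div hsq.hasDerivWithinAt
      (pow_ne_zero 2 (hne s hsD))).mono interior_subset
  · intro s hs
    have hsD := interior_subset hs
    have hs2 : 0 < s ^ 2 := sq_pos_of_ne_zero (hne s hsD)
    have hnum : u' s * s ^ 2 ≤ u s * (2 * s) := by
      calc u' s * s ^ 2 ≤ 2 * u s / s * s ^ 2 := by gcongr; exact hineq s hsD
        _ = u s * (2 * s) := by field_simp [hne s hsD]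
    exact div_nonpos_of_nonpos_of_nonneg (by linarith) (by positivity)

/-- Key step of Lemma 2: if `s₀ < 0`, `K > 0`, and a differentiable function
`Z` on `[s₀, 0)` satisfies `Z'(s) ≤ 2(Z(s) + s + 2K + 1)/s` there, then `Z`
takes a negative value somewhere in `[s₀, 0)`. -/
theorem exists_neg_of_diff_ineq (s₀ K : ℝ) (hs₀ : s₀ < 0) (hK : 0 < K)
    (Z Z' : ℝ → ℝ)
    (hderiv : ∀ s ∈ Set.Ico s₀ 0, HasDerivWithinAt Z (Z' s) (Set.Ico s₀ 0) s)
    (hineq : ∀ s ∈ Set.Ico s₀ 0, Z' s ≤ 2 * (Z s + s + 2 * K + 1) / s) :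
    ∃ s ∈ Set.Ico s₀ (0 : ℝ), Z s < 0 := by
  set u : ℝ → ℝ := fun s => Z s + 2 * s + (2 * K + 1)
  have hanti : AntitoneOn (fun s => u s / s ^ 2) (Ico s₀ 0) := by
    refine antitoneOn_div_sq_of_deriv_le (convex_Ico s₀ 0) (fun h => lt_irrefl _ h.2)
      (u' := fun s => Z' s + 2) (fun s hs => ?_) fun s hs => ?_
    · simpa [u] using
        ((hderiv s hs).add ((hasDerivAt_id s).hasDerivWithinAt.const_mul 2)).add_const (2 * K + 1)
    · have hs0 : s ≠ 0 := hs.2.ne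
      calc Z' s + 2 ≤ 2 * (Z s + s + 2 * K + 1) / s + 2 := by linarith [hineq s hs]
        _ = 2 * u s / s := by field_simp; ring
  set C := u s₀ / s₀ ^ 2
  have hbound : ∀ s ∈ Ico s₀ 0, Z s ≤ C * s ^ 2 - 2 * s - (2 * K + 1) := by
    intro s hs
    have hle : u s / s ^ 2 ≤ C := hanti ⟨le_rfl, hs₀⟩ hs hs.1
    have : u s ≤ C * s ^ 2 := (div_le_iff₀ (sq_pos_of_ne_zero hs.2.ne)).mp hle
    linarith
  have hlim : Tendsto (fun s : ℝ => C * s ^ 2 - 2 * s - (2 * K + 1)) (𝓝[<] 0)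
      (𝓝 (-(2 * K + 1))) := by
    have hcont : Continuous fun s : ℝ => C * s ^ 2 - 2 * s - (2 * K + 1) := by fun_prop
    simpa using (hcont.tendsto 0).mono_left nhdsWithin_le_nhds
  obtain ⟨s, hs, hneg⟩ :=
    (Eventually.and (Ico_mem_nhdsLT hs₀)
      (hlim.eventually (gt_mem_nhds (show -(2 * K + 1) < (0 : ℝ) by linarith)))).exists
  exact ⟨s, hs, (hbound s hs).trans_lt hneg⟩
end

section
/- Let I be a real interval containing 0, and let ξ, λ, D : I → ℝ be differentiable functions satisfying ξ'(t) = −D(t) ξ(t) and λ'(t) = D(t)(1 − λ(t)) for all t ∈ I. Then ξ(t) (λ(0) − 1) = ξ(0) (λ(t) − 1) for all t ∈ I; in particular, if λ(0) ≠ 1, then ξ(t) = C₃ (λ(t) − 1) with the constant C₃ = ξ(0)/(λ(0) − 1). -/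
/-!
Both `ξ` and `λ - 1` solve the linear equation `y' = -D y`, hence so does
`W = ξ · (λ(0) - 1) - ξ(0) · (λ - 1)`. Since `W(0) = 0` and `D` is continuous, uniqueness for
linear ODEs (Grönwall) forces `W ≡ 0` on the interval.
-/

open Set

open scoped NNReal

section LinearODE

variable {E : Type*} [NormedAddCommGroup E] [NormedSpace ℝ E]

lemma IsCompact.exists_lipschitzWith_smul {α : Type*} [TopologicalSpace α] {S : Set α}
    {c : α → ℝ} (hS : IsCompact S) (hc : ContinuousOn c S) :
    ∃ K : ℝ≥0, ∀ t ∈ S, LipschitzWith K (fun x : E => c t • x) := by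
  obtain ⟨C, hC⟩ := hS.exists_bound_of_continuousOn hc
  refine ⟨C.toNNReal, fun t ht => (lipschitzWith_smul (c t)).weaken ?_⟩
  rw [← NNReal.coe_le_coe, coe_nnnorm, Real.coe_toNNReal']
  exact (hC t ht).trans (le_max_left _ _)

lemma Convex.eqOn_zero_of_hasDerivWithinAt_smul_self {I : Set ℝ} {f : ℝ → E} {c : ℝ → ℝ} {a : ℝ}
    (hI : Convex ℝ I) (ha : a ∈ I) (hc : ContinuousOn c I)
    (hf : ∀ t ∈ I, HasDerivWithinAt f (c t • f t) I t) (hfa : f a = 0) : EqOn f 0 I := by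
  have hzero : ∀ s (u : Set ℝ), HasDerivWithinAt (0 : ℝ → E) (c s • (0 : ℝ → E) s) u s :=
    fun s u => by rw [Pi.zero_apply, smul_zero]; exact hasDerivWithinAt_const s u 0
  intro t ht
  rcases le_total a t with hat | hta
  · have hsub : Icc a t ⊆ I := hI.ordConnected.out ha ht
    obtain ⟨K, hK⟩ := isCompact_Icc.exists_lipschitzWith_smul (E := E) (hc.mono hsub)
    refine ODE_solution_unique_of_mem_Icc_right (v := fun s x => c s • x) (s := fun _ => univ)
      (fun s hs => (hK s (Ico_subset_Icc_self hs)).lipschitzOnWith)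
      (fun s hs => (hf s (hsub hs)).continuousWithinAt.mono hsub)
      (fun s hs => (hf s (hsub (Ico_subset_Icc_self hs))).mono_of_mem_nhdsWithin
        (hI.ordConnected.mem_nhdsGE (hsub (Ico_subset_Icc_self hs)) ht hs.2))
      (fun _ _ => mem_univ _) continuousOn_const (fun s _ => hzero s _) (fun _ _ => mem_univ _)
      hfa ⟨hat, le_rfl⟩
  · have hsub : Icc t a ⊆ I := hI.ordConnected.out ht ha
    obtain ⟨K, hK⟩ := isCompact_Icc.exists_lipschitzWith_smul (E := E) (hc.mono hsub)
    refine ODE_solution_unique_of_mem_Icc_left (v := fun s x => c s • x) (s := fun _ => univ)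
      (fun s hs => (hK s (Ioc_subset_Icc_self hs)).lipschitzOnWith)
      (fun s hs => (hf s (hsub hs)).continuousWithinAt.mono hsub)
      (fun s hs => (hf s (hsub (Ioc_subset_Icc_self hs))).mono_of_mem_nhdsWithin
        (hI.ordConnected.mem_nhdsLE ht (hsub (Ioc_subset_Icc_self hs)) hs.1))
      (fun _ _ => mem_univ _) continuousOn_const (fun s _ => hzero s _) (fun _ _ => mem_univ _)
      hfa ⟨le_rfl, hta⟩

end LinearODE

/-- For plane electrostatic oscillations, along characteristics the vorticity
`ξ` and the electric divergence `λ` satisfy `ξ' = −Dξ`, `λ' = D(1 − λ)`;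
hence `ξ/(λ − 1)` is a first integral:
`ξ(t)(λ(0) − 1) = ξ(0)(λ(t) − 1)`, and in particular, if `λ(0) ≠ 1`,
`ξ(t) = C₃ (λ(t) − 1)` with `C₃ = ξ(0)/(λ(0) − 1)`. -/
theorem vorticity_first_integral (I : Set ℝ) (hI : Convex ℝ I) (h0 : (0 : ℝ) ∈ I)
    (ξ lam D : ℝ → ℝ)
    (hD : ∀ t ∈ I, DifferentiableWithinAt ℝ D I t)
    (hξ : ∀ t ∈ I, HasDerivWithinAt ξ (-(D t) * ξ t) I t)
    (hlam : ∀ t ∈ I, HasDerivWithinAt lam (D t * (1 - lam t)) I t) :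
    (∀ t ∈ I, ξ t * (lam 0 - 1) = ξ 0 * (lam t - 1)) ∧
    (lam 0 ≠ 1 → ∀ t ∈ I, ξ t = (ξ 0 / (lam 0 - 1)) * (lam t - 1)) := by
  set W : ℝ → ℝ := fun t => ξ t * (lam 0 - 1) - ξ 0 * (lam t - 1)
  have hW : ∀ t ∈ I, HasDerivWithinAt W (-(D t) • W t) I t := fun t ht =>
    (((hξ t ht).mul_const _).sub (((hlam t ht).sub_const 1).const_mul _)).congr_deriv
      (by simp only [W, smul_eq_mul]; ring)
  have hW0 : W 0 = 0 := sub_self _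
  have hWI := hI.eqOn_zero_of_hasDerivWithinAt_smul_self h0
    (fun t ht => (hD t ht).continuousWithinAt.neg) hW hW0
  have first_integral : ∀ t ∈ I, ξ t * (lam 0 - 1) = ξ 0 * (lam t - 1) :=
    fun t ht => sub_eq_zero.1 (hWI ht)
  refine ⟨first_integral, fun hne t ht => ?_⟩
  rw [div_mul_eq_mul_div, eq_div_iff (sub_ne_zero.2 hne), first_integral t ht]
end

section
/- Let s_0 < 0, c ∈ ℝ, and Z_0 ≥ 0 satisfy Z_0 + c² s_0² + (2/3) s_0 + 1/2 < 0. Then there is no differentiable function Z : (−∞, s_0] → ℝ with Z(s_0) = Z_0, Z(s) ≥ 0 for all s ≤ s_0, and Z'(s) ≥ 2 (2Z(s) + s + c² s² + 1)/s for all s ≤ s_0. (By backward comparison with the quartic solution Z_1(s) = A_4 s⁴ − c² s² − (2/3) s − 1/2, A_4 = (Z_0 + c² s_0² + (2/3) s_0 + 1/2)/s_0⁴ < 0, any such Z would satisfy Z(s) ≤ Z_1(s) for s < s_0, and Z_1(s) → −∞ as s → −∞.) -/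
/-- Lemma 3 (condition `Δ₋ < 0` prevents escape to `s = −∞` in the lower
half-plane): if `s₀ < 0`, `Z₀ ≥ 0` and `Z₀ + c² s₀² + (2/3) s₀ + 1/2 < 0`,
then there is no differentiable `Z : (−∞, s₀] → ℝ` with `Z(s₀) = Z₀`,
`Z ≥ 0`, and `Z'(s) ≥ 2(2Z(s) + s + c² s² + 1)/s` on `(−∞, s₀]`. -/
theorem no_nonneg_solution_below (s₀ c Z₀ : ℝ) (hs₀ : s₀ < 0) (hZ₀ : 0 ≤ Z₀)
    (hcond : Z₀ + c ^ 2 * s₀ ^ 2 + (2 / 3) * s₀ + 1 / 2 < 0) :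
    ¬ ∃ Z Z' : ℝ → ℝ,
        Z s₀ = Z₀ ∧
        (∀ s ∈ Set.Iic s₀, 0 ≤ Z s) ∧
        (∀ s ∈ Set.Iic s₀, HasDerivWithinAt Z (Z' s) (Set.Iic s₀) s) ∧
        (∀ s ∈ Set.Iic s₀, 2 * (2 * Z s + s + c ^ 2 * s ^ 2 + 1) / s ≤ Z' s) := by
  rintro ⟨Z, Z', hZs₀, hZnn, hderiv, hineq⟩
  set N : ℝ → ℝ := fun s => Z s + c ^ 2 * s ^ 2 + (2 / 3) * s + 1 / 2 with hN
  set H : ℝ → ℝ := fun s => N s / s ^ 4 with hH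
  -- derivative facts on the interior
  have hderivH : ∀ x ∈ Set.Iio s₀,
      HasDerivAt H (((Z' x + (c ^ 2 * (2 * x) + 2 / 3)) * x ^ 4
        - N x * (4 * x ^ 3)) / (x ^ 4) ^ 2) x := by
    intro x hx
    have hx' : x < s₀ := hx
    have hx0 : x < 0 := hx'.trans hs₀
    have hZx : HasDerivAt Z (Z' x) x :=
      (hderiv x hx'.le).hasDerivAt (Iic_mem_nhds hx')
    have hNx : HasDerivAt N (Z' x + (c ^ 2 * (2 * x) + 2 / 3)) x := by
      have h1 : HasDerivAt (fun s : ℝ => c ^ 2 * s ^ 2) (c ^ 2 * (2 * x)) x := by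
        simpa using ((hasDerivAt_pow 2 x).const_mul (c ^ 2))
      have h2 : HasDerivAt (fun s : ℝ => (2 / 3 : ℝ) * s) (2 / 3) x := by
        simpa using (hasDerivAt_id x).const_mul (2 / 3 : ℝ)
      have := ((hZx.add h1).add h2).add_const (1 / 2 : ℝ)
      simpa [hN, add_assoc] using this
    have hDx : HasDerivAt (fun s : ℝ => s ^ 4) (4 * x ^ 3) x := by
      simpa using hasDerivAt_pow 4 x
    exact hNx.div hDx (pow_ne_zero _ hx0.ne)
  -- H is monotone on Iic s₀
  have hmono : MonotoneOn H (Set.Iic s₀) := by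
    apply monotoneOn_of_deriv_nonneg (convex_Iic s₀)
    · -- continuity
      intro x hx
      have hx0 : x < 0 := lt_of_le_of_lt hx hs₀
      have hZd : DifferentiableWithinAt ℝ Z (Set.Iic s₀) x :=
        (hderiv x hx).differentiableWithinAt
      have hNd : DifferentiableWithinAt ℝ N (Set.Iic s₀) x := by
        exact ((hZd.add ((differentiable_const (c^2)).differentiableAt.mul
          (differentiableAt_pow 2)).differentiableWithinAt).add
          (((differentiable_id.const_mul (2/3:ℝ)) x).differentiableWithinAt)).add
          (differentiableWithinAt_const _)
      exact (hNd.div ((differentiableAt_pow 4).differentiableWithinAt)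
        (pow_ne_zero _ hx0.ne)).continuousWithinAt
    · rw [interior_Iic]
      intro x hx
      exact (hderivH x hx).differentiableAt.differentiableWithinAt
    · rw [interior_Iic]
      intro x hx
      have hx' : x < s₀ := hx
      have hx0 : x < 0 := hx'.trans hs₀
      rw [(hderivH x hx).deriv]
      have key : 2 * (2 * Z x + x + c ^ 2 * x ^ 2 + 1) ≥ Z' x * x := by
        have h := hineq x hx'.le
        rw [div_le_iff_of_neg hx0] at h
        linarith
      have hx3 : x ^ 3 < 0 := by
        have hx2 : 0 < x ^ 2 := by nlinarith
        have hxx : x ^ 3 = x * x ^ 2 := by ring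
        rw [hxx]; exact mul_neg_of_neg_of_pos hx0 hx2
      apply div_nonneg _ (sq_nonneg _)
      have key3 : x ^ 3 * (2 * (2 * Z x + x + c ^ 2 * x ^ 2 + 1)) ≤ x ^ 3 * (Z' x * x) :=
        mul_le_mul_of_nonpos_left key hx3.le
      simp only [hN]
      nlinarith [key3]
  -- H s₀ < 0
  have hs₀4 : (0:ℝ) < s₀ ^ 4 := Even.pow_pos ⟨2, by norm_num⟩ hs₀.ne
  have hHs₀ : H s₀ < 0 := by
    have : N s₀ < 0 := by simp only [hN]; rw [hZs₀]; linarith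
    exact div_neg_of_neg_of_pos this hs₀4
  set a : ℝ := -(H s₀) with ha
  have haH : H s₀ = -a := by rw [ha, neg_neg]
  have ha0 : 0 < a := by rw [ha]; linarith
  -- pick a very negative point
  set s₁ : ℝ := min s₀ (-1) - 2 / (3 * a) with hs₁def
  have hfrac : 0 < 2 / (3 * a) := by
    apply div_pos two_pos; linarith
  have hs₁le : s₁ ≤ s₀ := by
    have : min s₀ (-1) ≤ s₀ := min_le_left _ _
    simp only [hs₁def]; linarith
  have hs₁le1 : s₁ ≤ -1 := by
    have : min s₀ (-1) ≤ -1 := min_le_right _ _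
    simp only [hs₁def]; linarith
  have hkey : 3 * a * (-s₁) ≥ 2 := by
    have h1 : -s₁ ≥ 2 / (3 * a) := by
      have : min s₀ (-1) ≤ -1 := min_le_right _ _
      simp only [hs₁def]; linarith
    have h2 : 3 * a * (2 / (3 * a)) = 2 := by field_simp
    calc 3 * a * (-s₁) ≥ 3 * a * (2 / (3 * a)) := by
          apply mul_le_mul_of_nonneg_left h1 (by positivity)
      _ = 2 := h2
  -- from monotonicity
  have hHmono : H s₁ ≤ H s₀ := hmono (show s₁ ∈ Set.Iic s₀ from hs₁le)
    (Set.mem_Iic.mpr le_rfl) hs₁le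
  have hs₁neg : s₁ < 0 := lt_of_le_of_lt hs₁le hs₀
  have hs₁4 : (0:ℝ) < s₁ ^ 4 := Even.pow_pos ⟨2, by norm_num⟩ hs₁neg.ne
  have hNle : N s₁ ≤ -a * s₁ ^ 4 := by
    have h2 : N s₁ / s₁ ^ 4 ≤ -a := by rw [← haH]; exact hHmono
    exact (div_le_iff₀ hs₁4).mp h2
  have hZ1nn : 0 ≤ Z s₁ := hZnn s₁ hs₁le
  clear_value a s₁
  -- final contradiction
  have hZ1 : Z s₁ ≤ -a * s₁ ^ 4 - c ^ 2 * s₁ ^ 2 - (2 / 3) * s₁ - 1 / 2 := by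
    simp only [hN] at hNle; linarith
  have hc2 : 0 ≤ c ^ 2 * s₁ ^ 2 := by positivity
  have ht : (1:ℝ) ≤ -s₁ := by linarith
  have hat : (2:ℝ) / 3 ≤ a * (-s₁) := by nlinarith
  have ht3 : (-s₁) ≤ (-s₁) ^ 3 := by nlinarith
  have h4 : (2 / 3) * (-s₁) ^ 3 ≤ (a * (-s₁)) * (-s₁) ^ 3 :=
    mul_le_mul_of_nonneg_right hat (pow_nonneg (by linarith) 3)
  have h5 : (a * (-s₁)) * (-s₁) ^ 3 = a * s₁ ^ 4 := by ring
  have h6 := mul_le_mul_of_nonneg_left ht3 (by norm_num : (0:ℝ) ≤ 2 / 3)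
  linarith
end

section
/- Let d ≥ 1 be an integer with d ≠ 2, and let F, G : I → ℝ be differentiable functions on an interval I satisfying F' = −F² − G and G' = F(1 − d·G), with 1 − d·G(t) > 0 for all t ∈ I. Then the quantity E(t) = ((d−2) F(t)² + 1 − 2 G(t)) / (1 − d·G(t))^{2/d} is constant on I. Equivalently, F² = (2G − 1)/(d − 2) + C_d (1 − d G)^{2/d} along the trajectory, where C_d = (1 − 2G(0) + (d−2) F(0)²) / ((d−2)(1 − d G(0))^{2/d}). -/
/-!
Along a solution, the numerator `N = (d−2)F² + 1 − 2G` and the denominator `D = (1 − dG)^{2/d}`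
both satisfy the same linear equation `y' = −2F y`; hence `(N/D)' = (N'D − ND')/D² = 0`, and a
function with vanishing derivative on an interval is constant.
-/

theorem Convex.eq_of_forall_hasDerivWithinAt_zero {E : Type*} [NormedAddCommGroup E]
    [NormedSpace ℝ E] {f : ℝ → E} {s : Set ℝ} (hs : Convex ℝ s)
    (hf : ∀ x ∈ s, HasDerivWithinAt f 0 s x) {x y : ℝ} (hx : x ∈ s) (hy : y ∈ s) :
    f x = f y := by
  have h := norm_image_sub_le_of_norm_hasDerivWithin_le (C := 0) hf (fun _ _ => by simp) hs hx hy
  rwa [zero_mul, norm_le_zero_iff, sub_eq_zero, eq_comm] at h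

theorem HasDerivWithinAt.div_zero_of_same_rate {N D : ℝ → ℝ} {a x : ℝ} {s : Set ℝ}
    (hN : HasDerivWithinAt N (a * N x) s x) (hD : HasDerivWithinAt D (a * D x) s x)
    (hD0 : D x ≠ 0) : HasDerivWithinAt (fun y => N y / D y) 0 s x := by
  refine (hN.div hD hD0).congr_deriv ?_
  ring

section RadialSystem

variable {d : ℝ} {F G : ℝ → ℝ} {s : Set ℝ} {t : ℝ}

theorem hasDerivWithinAt_radial_numerator (hF : HasDerivWithinAt F (-(F t) ^ 2 - G t) s t)
    (hG : HasDerivWithinAt G (F t * (1 - d * G t)) s t) :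
    HasDerivWithinAt (fun t => (d - 2) * F t ^ 2 + 1 - 2 * G t)
      (-2 * F t * ((d - 2) * F t ^ 2 + 1 - 2 * G t)) s t := by
  refine ((((hF.fun_pow 2).const_mul (d - 2)).add_const 1).fun_sub (hG.const_mul 2)).congr_deriv ?_
  push_cast
  ring

theorem hasDerivWithinAt_radial_denominator (hd : d ≠ 0)
    (hG : HasDerivWithinAt G (F t * (1 - d * G t)) s t) (hpos : 0 < 1 - d * G t) :
    HasDerivWithinAt (fun t => (1 - d * G t) ^ (2 / d))
      (-2 * F t * (1 - d * G t) ^ (2 / d)) s t := by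
  refine (((hG.const_mul d).const_sub 1).rpow_const (Or.inl hpos.ne')).congr_deriv ?_
  rw [Real.rpow_sub hpos, Real.rpow_one]
  field_simp

end RadialSystem

theorem radial_first_integral_d_ne_two_general (d : ℕ) (hd : 1 ≤ d)
    (I : Set ℝ) (hI : Convex ℝ I) (F G : ℝ → ℝ)
    (hF : ∀ t ∈ I, HasDerivWithinAt F (-(F t) ^ 2 - G t) I t)
    (hG : ∀ t ∈ I, HasDerivWithinAt G (F t * (1 - (d : ℝ) * G t)) I t)
    (hpos : ∀ t ∈ I, 0 < 1 - (d : ℝ) * G t) :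
    ∀ t ∈ I, ∀ t' ∈ I,
      (((d : ℝ) - 2) * (F t) ^ 2 + 1 - 2 * G t) / (1 - (d : ℝ) * G t) ^ ((2 : ℝ) / d)
        = (((d : ℝ) - 2) * (F t') ^ 2 + 1 - 2 * G t') /
            (1 - (d : ℝ) * G t') ^ ((2 : ℝ) / d) := by
  have hd0 : (d : ℝ) ≠ 0 := by positivity
  intro t ht t' ht'
  apply hI.eq_of_forall_hasDerivWithinAt_zero _ ht ht'
  intro x hx
  exact (hasDerivWithinAt_radial_numerator (hF x hx) (hG x hx)).div_zero_of_same_rate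
    (hasDerivWithinAt_radial_denominator hd0 (hG x hx) (hpos x hx))
    (Real.rpow_pos_of_pos (hpos x hx) _).ne'

/-- First integral of the radially symmetric system `F' = −F² − G`,
`G' = F(1 − dG)` in dimension `d ≠ 2`: the quantity
`((d−2)F² + 1 − 2G)/(1 − dG)^{2/d}` is constant along trajectories
staying in the half-plane `1 − dG > 0`. -/
theorem radial_first_integral_d_ne_two (d : ℕ) (hd : 1 ≤ d) (hd2 : d ≠ 2)
    (I : Set ℝ) (hI : Convex ℝ I) (F G : ℝ → ℝ)
    (hF : ∀ t ∈ I, HasDerivWithinAt F (-(F t) ^ 2 - G t) I t)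
    (hG : ∀ t ∈ I, HasDerivWithinAt G (F t * (1 - (d : ℝ) * G t)) I t)
    (hpos : ∀ t ∈ I, 0 < 1 - (d : ℝ) * G t) :
    ∀ t ∈ I, ∀ t' ∈ I,
      (((d : ℝ) - 2) * (F t) ^ 2 + 1 - 2 * G t) / (1 - (d : ℝ) * G t) ^ ((2 : ℝ) / d)
        = (((d : ℝ) - 2) * (F t') ^ 2 + 1 - 2 * G t') /
            (1 - (d : ℝ) * G t') ^ ((2 : ℝ) / d) :=
  radial_first_integral_d_ne_two_general d hd I hI F G hF hG hpos
end

section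
/- Let F, G : I → ℝ be differentiable functions on an interval I satisfying F' = −F² − G and G' = F(1 − 2G), with 1 − 2G(t) > 0 for all t ∈ I. Then the quantity E(t) = (1 + 2 F(t)²)/(1 − 2 G(t)) + ln(1 − 2 G(t)) is constant on I. Equivalently, 2F² = −(1 − 2G) ln(1 − 2G) + C₂ (1 − 2G) − 1 along the trajectory, where C₂ = (1 + 2 F(0)²)/(1 − 2 G(0)) + ln(1 − 2 G(0)). -/
theorem Convex.is_const_of_hasDerivWithinAt_zero {𝕜 E : Type*} [RCLike 𝕜]
    [NormedAddCommGroup E] [NormedSpace 𝕜 E] {f : 𝕜 → E} {s : Set 𝕜} {x y : 𝕜}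
    (hs : Convex ℝ s) (hf : ∀ z ∈ s, HasDerivWithinAt f 0 s z) (hx : x ∈ s) (hy : y ∈ s) :
    f x = f y := by
  have h := hs.norm_image_sub_le_of_norm_hasDerivWithin_le hf (fun _ _ => norm_zero.le) hx hy
  rw [zero_mul, norm_le_zero_iff, sub_eq_zero] at h
  exact h.symm

noncomputable def radialFirstIntegral (f g : ℝ) : ℝ :=
  (1 + 2 * f ^ 2) / (1 - 2 * g) + Real.log (1 - 2 * g)

/-- Along a solution, with `u = 1 - 2G` and `u' = -2Fu`, the quotient has derivative `2F`
and the logarithm `-2F`. -/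
theorem hasDerivWithinAt_radialFirstIntegral {F G : ℝ → ℝ} {s : Set ℝ} {t : ℝ}
    (hF : HasDerivWithinAt F (-(F t) ^ 2 - G t) s t)
    (hG : HasDerivWithinAt G (F t * (1 - 2 * G t)) s t) (hG₀ : 1 - 2 * G t ≠ 0) :
    HasDerivWithinAt (fun t => radialFirstIntegral (F t) (G t)) 0 s t := by
  have hu : HasDerivWithinAt (fun t => 1 - 2 * G t) (-(2 * (F t * (1 - 2 * G t)))) s t := by
    simpa using (hG.const_mul 2).const_sub 1
  have hnum : HasDerivWithinAt (fun t => 1 + 2 * F t ^ 2)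
      (2 * (2 * F t ^ 1 * (-(F t) ^ 2 - G t))) s t := by
    simpa using ((hF.pow 2).const_mul 2).const_add 1
  refine ((hnum.div hu hG₀).add (hu.log hG₀)).congr_deriv ?_
  field_simp
  ring

/-- First integral of the plane (d = 2) radially symmetric system
`F' = −F² − G`, `G' = F(1 − 2G)`: the quantity
`(1 + 2F²)/(1 − 2G) + ln(1 − 2G)` is constant along trajectories staying
in the half-plane `1 − 2G > 0`. -/
theorem radial_first_integral_d_two (I : Set ℝ) (hI : Convex ℝ I) (F G : ℝ → ℝ)
    (hF : ∀ t ∈ I, HasDerivWithinAt F (-(F t) ^ 2 - G t) I t)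
    (hG : ∀ t ∈ I, HasDerivWithinAt G (F t * (1 - 2 * G t)) I t)
    (hpos : ∀ t ∈ I, 0 < 1 - 2 * G t) :
    ∀ t ∈ I, ∀ t' ∈ I,
      (1 + 2 * (F t) ^ 2) / (1 - 2 * G t) + Real.log (1 - 2 * G t)
        = (1 + 2 * (F t') ^ 2) / (1 - 2 * G t') + Real.log (1 - 2 * G t') :=
  fun _ ht _ ht' => hI.is_const_of_hasDerivWithinAt_zero
    (fun z hz => hasDerivWithinAt_radialFirstIntegral (hF z hz) (hG z hz) (hpos z hz).ne') ht ht'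
end

section
/- Let F, G be a maximal solution of the planar ODE system F' = −F² − G, G' = F(1 − 2G) with initial data satisfying G(0) < 1/2. Then the solution is defined for all t ≥ 0 and the functions F and G are bounded on [0, ∞). -/
/-!
On the half-plane `0 < 1 - 2G`, `H(F, G) = (2F² + 1) / (1 - 2G) + log (1 - 2G)` is a first integral,
and its level sets are compact: `1 / (2 (1 - 2G)) < H` keeps them away from the line `G = 1/2`, while
`2F² + 1 = (1 - 2G) (H - log (1 - 2G)) ≤ exp (H - 1)` and `1 - 2G ≤ exp H` bound `F` and `G`.
Cut the vector field off outside a box around the level set of the initial datum; the truncated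
field is still parallel to the original one, so it conserves `H` and has a global solution. The
times at which this solution lies on the level set form an open set (conservation) and a closed
set (the level set is closed), hence all of `ℝ`; there the cutoff equals `1`.
-/

open Set Real
open scoped Manifold

section GlobalExistence

variable {E : Type*} [NormedAddCommGroup E] [NormedSpace ℝ E]

theorem contMDiff_tangentSection_of_contDiff {w : E → E} (hw : ContDiff ℝ 1 w) :
    ContMDiff 𝓘(ℝ, E) 𝓘(ℝ, E).tangent 1 (fun x ↦ (⟨x, w x⟩ : TangentBundle 𝓘(ℝ, E) E)) := by
  intro x₀
  apply (Bundle.contMDiffAt_section x₀).2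
  have h : (fun x ↦ (trivializationAt E (TangentSpace 𝓘(ℝ, E)) x₀ ⟨x, w x⟩).2) = w := by
    funext x
    rw [TangentBundle.trivializationAt_apply]
    simp only [mfld_simps]
    show (fderivWithin ℝ (id ∘ id) univ x) (w x) = w x
    rw [Function.comp_id, fderivWithin_id uniqueDiffWithinAt_univ]
    rfl
  rw [h, contMDiffAt_iff_contDiffAt]
  exact hw.contDiffAt

variable [CompleteSpace E]

theorem exists_hasDerivAt_Ioo_of_lipschitzWith {w : E → E} {L : NNReal} {B : ℝ}
    (hlip : LipschitzWith L w) (hB : ∀ x, ‖w x‖ ≤ B) (x₀ : E) :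
    ∃ γ : ℝ → E, γ 0 = x₀ ∧ ∀ t ∈ Ioo (-1 : ℝ) 1, HasDerivAt γ (w (γ t)) t := by
  have hpl : IsPicardLindelof (fun _ : ℝ ↦ w) (tmin := -1) (tmax := 1)
      ⟨0, by norm_num, by norm_num⟩ x₀ B.toNNReal 0 B.toNNReal L :=
    { lipschitzOnWith := fun _ _ ↦ hlip.lipschitzOnWith
      continuousOn := fun _ _ ↦ continuousOn_const
      norm_le := fun _ _ x _ ↦ (hB x).trans (Real.le_coe_toNNReal B)
      mul_max_le := by norm_num }
  obtain ⟨γ, hγ0, hγ⟩ := hpl.exists_eq_forall_mem_Icc_hasDerivWithinAt₀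
  exact ⟨γ, hγ0, fun t ht ↦
    (hγ t (Ioo_subset_Icc_self ht)).hasDerivAt (Icc_mem_nhds ht.1 ht.2)⟩

theorem exists_hasDerivAt_of_contDiff_of_hasCompactSupport {w : E → E}
    (hw : ContDiff ℝ 1 w) (hcs : HasCompactSupport w) (x₀ : E) :
    ∃ γ : ℝ → E, γ 0 = x₀ ∧ ∀ t, HasDerivAt γ (w (γ t)) t := by
  obtain ⟨L, hlip⟩ := ContDiff.lipschitzWith_of_hasCompactSupport hcs hw one_ne_zero
  obtain ⟨B, hB⟩ := hcs.exists_bound_of_continuous hw.continuous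
  have hlocal (x : E) :
      ∃ γ : ℝ → E, γ 0 = x ∧ IsMIntegralCurveOn (I := 𝓘(ℝ, E)) γ w (Ioo (-1) 1) := by
    obtain ⟨γ, hγ0, hγ⟩ := exists_hasDerivAt_Ioo_of_lipschitzWith hlip hB x
    exact ⟨γ, hγ0, fun t ht ↦ (hasMFDerivAt_iff_hasFDerivAt.mpr
      (hasDerivAt_iff_hasFDerivAt.mp (hγ t ht))).hasMFDerivWithinAt⟩
  obtain ⟨γ, hγ0, hγ⟩ := exists_isMIntegralCurve_of_isMIntegralCurveOn
    (contMDiff_tangentSection_of_contDiff hw) one_pos hlocal x₀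
  exact ⟨γ, hγ0, fun t ↦ hasDerivAt_iff_hasFDerivAt.mpr (hasMFDerivAt_iff_hasFDerivAt.mp (hγ t))⟩

end GlobalExistence

theorem forall_mem_and_eq_of_hasDerivAt_comp_eq_zero {E : Type*} [TopologicalSpace E]
    {γ : ℝ → E} {U K : Set E} {H : E → ℝ} {c : ℝ} (hγ : Continuous γ) (hU : IsOpen U)
    (hK : IsClosed K) (hKU : K ⊆ U) (hlevel : ∀ p ∈ U, H p = c → p ∈ K)
    (hH : ∀ t, γ t ∈ U → HasDerivAt (fun s ↦ H (γ s)) 0 t) (h₀ : γ 0 ∈ U) (hc : H (γ 0) = c) :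
    ∀ t, γ t ∈ U ∧ H (γ t) = c := by
  set S := γ ⁻¹' U ∩ (fun s ↦ H (γ s)) ⁻¹' {c}
  have hS : S = γ ⁻¹' K ∩ (fun s ↦ H (γ s)) ⁻¹' {c} := by
    ext t
    exact ⟨fun h ↦ ⟨hlevel _ h.1 h.2, h.2⟩, fun h ↦ ⟨hKU h.1, h.2⟩⟩
  have hopen : IsOpen S :=
    (hU.preimage hγ).isOpen_inter_preimage_of_deriv_eq_zero
      (fun t ht ↦ (hH t ht).differentiableAt.differentiableWithinAt)
      (fun t ht ↦ (hH t ht).deriv) _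
  have hclosed : IsClosed S := by
    rw [hS]
    exact ContinuousOn.preimage_isClosed_of_isClosed
      (fun t ht ↦ (hH t (hKU ht)).continuousAt.continuousWithinAt) (hK.preimage hγ)
      isClosed_singleton
  intro t
  have ht : t ∈ S := (IsClopen.eq_univ ⟨hclosed, hopen⟩ ⟨0, h₀, hc⟩).symm ▸ mem_univ t
  exact ht

theorem HasDerivAt.fst {𝕜 E F : Type*} [NontriviallyNormedField 𝕜] [NormedAddCommGroup E]
    [NormedSpace 𝕜 E] [NormedAddCommGroup F] [NormedSpace 𝕜 F] {f : 𝕜 → E × F} {f' : E × F}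
    {t : 𝕜} (h : HasDerivAt f f' t) : HasDerivAt (fun s ↦ (f s).1) f'.1 t :=
  (hasFDerivAt_fst (p := f t)).comp_hasDerivAt t h

theorem HasDerivAt.snd {𝕜 E F : Type*} [NontriviallyNormedField 𝕜] [NormedAddCommGroup E]
    [NormedSpace 𝕜 E] [NormedAddCommGroup F] [NormedSpace 𝕜 F] {f : 𝕜 → E × F} {f' : E × F}
    {t : 𝕜} (h : HasDerivAt f f' t) : HasDerivAt (fun s ↦ (f s).2) f'.2 t :=
  (hasFDerivAt_snd (p := f t)).comp_hasDerivAt t h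

theorem mul_sub_log_le_exp_sub_one (c : ℝ) {u : ℝ} (hu : 0 < u) :
    u * (c - log u) ≤ exp (c - 1) := by
  have h := add_one_le_exp (c - 1 - log u)
  rw [exp_sub, exp_log hu, le_div_iff₀ hu] at h
  linarith

def planeField (p : ℝ × ℝ) : ℝ × ℝ := (-p.1 ^ 2 - p.2, p.1 * (1 - 2 * p.2))

def planeDensity (p : ℝ × ℝ) : ℝ := 1 - 2 * p.2

noncomputable def planeFirstIntegral (p : ℝ × ℝ) : ℝ :=
  (2 * p.1 ^ 2 + 1) / planeDensity p + log (planeDensity p)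

theorem continuous_planeDensity : Continuous planeDensity := by
  unfold planeDensity; fun_prop

theorem hasDerivAt_planeFirstIntegral_comp {γ : ℝ → ℝ × ℝ} {a t : ℝ}
    (hγ : HasDerivAt γ (a • planeField (γ t)) t) (hu : planeDensity (γ t) ≠ 0) :
    HasDerivAt (fun s ↦ planeFirstIntegral (γ s)) 0 t := by
  have hF : HasDerivAt (fun s ↦ (γ s).1) (a * (-(γ t).1 ^ 2 - (γ t).2)) t := hγ.fst
  have hu' : HasDerivAt (fun s ↦ planeDensity (γ s))
      (-(2 * (a * ((γ t).1 * planeDensity (γ t))))) t :=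
    (hγ.snd.const_mul 2).const_sub 1
  have hH := (((hF.fun_pow 2).const_mul 2).add_const 1).fun_div hu' hu |>.fun_add (hu'.log hu)
  refine hH.congr_deriv ?_
  field_simp
  simp only [planeDensity]
  ring

section LevelSets

variable {p : ℝ × ℝ}

theorem inv_two_mul_planeDensity_lt_planeFirstIntegral (hu : 0 < planeDensity p) :
    (2 * planeDensity p)⁻¹ < planeFirstIntegral p := by
  have hlog : 1 - (2 * planeDensity p)⁻¹ ≤ log (2 * planeDensity p) :=
    one_sub_inv_le_log_of_pos (by positivity)
  rw [log_mul two_ne_zero hu.ne'] at hlog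
  have hF : (planeDensity p)⁻¹ ≤ (2 * p.1 ^ 2 + 1) / planeDensity p := by
    rw [inv_eq_one_div]; gcongr; nlinarith
  have : (2 * planeDensity p)⁻¹ = (planeDensity p)⁻¹ / 2 := by field_simp
  unfold planeFirstIntegral
  linarith [log_two_lt_d9]

theorem planeFirstIntegral_pos (hu : 0 < planeDensity p) : 0 < planeFirstIntegral p :=
  lt_trans (by positivity) (inv_two_mul_planeDensity_lt_planeFirstIntegral hu)

theorem inv_two_mul_planeFirstIntegral_lt_planeDensity (hu : 0 < planeDensity p) :
    (2 * planeFirstIntegral p)⁻¹ < planeDensity p := by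
  have h := inv_two_mul_planeDensity_lt_planeFirstIntegral hu
  rw [inv_lt_comm₀ (by positivity) (planeFirstIntegral_pos hu)] at h
  rw [mul_inv]
  linarith

theorem planeDensity_le_exp_planeFirstIntegral (hu : 0 < planeDensity p) :
    planeDensity p ≤ exp (planeFirstIntegral p) := by
  rw [← log_le_iff_le_exp hu, planeFirstIntegral]
  have : 0 ≤ (2 * p.1 ^ 2 + 1) / planeDensity p := by positivity
  linarith

theorem norm_le_exp_planeFirstIntegral (hu : 0 < planeDensity p) :
    ‖p‖ ≤ exp (planeFirstIntegral p) := by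
  set C := planeFirstIntegral p
  have hC : 1 ≤ exp C := one_le_exp (planeFirstIntegral_pos hu).le
  have hF : 2 * p.1 ^ 2 + 1 = planeDensity p * (C - log (planeDensity p)) := by
    simp only [C, planeFirstIntegral]; field_simp; ring
  have hF' : p.1 ^ 2 ≤ exp C ^ 2 := by
    have := mul_sub_log_le_exp_sub_one C hu
    have : exp (C - 1) ≤ exp C := exp_le_exp.mpr (by linarith)
    nlinarith
  have hG := planeDensity_le_exp_planeFirstIntegral hu
  simp only [planeDensity] at hu hG
  refine norm_prod_le_iff.mpr ⟨abs_le_of_sq_le_sq hF' (exp_pos C).le, ?_⟩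
  rw [Real.norm_eq_abs, abs_le]
  constructor <;> linarith

end LevelSets

/-- For the plane (d = 2) radially symmetric system `F' = −F² − G`,
`G' = F(1 − 2G)` with initial data `G(0) < 1/2`, the (maximal) solution is
defined for all `t ≥ 0` and `F`, `G` are bounded on `[0, ∞)`. Since the
right-hand side is smooth, solutions are unique, so this is expressed as the
existence of a globally defined bounded solution with the given initial data. -/
theorem plane_radial_global_bounded (F₀ G₀ : ℝ) (hG₀ : G₀ < 1 / 2) :
    ∃ F G : ℝ → ℝ, F 0 = F₀ ∧ G 0 = G₀ ∧
      (∀ t : ℝ, 0 ≤ t →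
        HasDerivAt F (-(F t) ^ 2 - G t) t ∧
        HasDerivAt G (F t * (1 - 2 * G t)) t) ∧
      ∃ M : ℝ, ∀ t : ℝ, 0 ≤ t → |F t| ≤ M ∧ |G t| ≤ M := by
  have hu₀ : 0 < planeDensity (F₀, G₀) := by simp only [planeDensity]; linarith
  set C := planeFirstIntegral (F₀, G₀)
  have hC : 0 < C := planeFirstIntegral_pos hu₀
  let χ : ContDiffBump (0 : ℝ × ℝ) := ⟨exp C, exp C + 1, exp_pos C, lt_add_one _⟩
  obtain ⟨γ, hγ0, hγ⟩ := exists_hasDerivAt_of_contDiff_of_hasCompactSupport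
    (w := fun p ↦ χ p • planeField p) (χ.contDiff.smul (by unfold planeField; fun_prop))
    χ.hasCompactSupport.smul_right (F₀, G₀)
  have hlevel : ∀ t, 0 < planeDensity (γ t) ∧ planeFirstIntegral (γ t) = C :=
    forall_mem_and_eq_of_hasDerivAt_comp_eq_zero (U := {p | 0 < planeDensity p})
      (K := {p | (2 * C)⁻¹ ≤ planeDensity p})
      (continuous_iff_continuousAt.mpr fun t ↦ (hγ t).continuousAt)
      (isOpen_lt continuous_const continuous_planeDensity)
      (isClosed_le continuous_const continuous_planeDensity)
      (fun p (hp : (2 * C)⁻¹ ≤ planeDensity p) ↦ lt_of_lt_of_le (by positivity) hp)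
      (fun p hp hpC ↦ (hpC ▸ inv_two_mul_planeFirstIntegral_lt_planeDensity hp).le)
      (fun t ht ↦ hasDerivAt_planeFirstIntegral_comp (hγ t) ht.ne')
      (by rwa [hγ0]) (by rw [hγ0])
  have hbox (t : ℝ) : ‖γ t‖ ≤ exp C := by
    simpa only [(hlevel t).2] using norm_le_exp_planeFirstIntegral (hlevel t).1
  have hsol (t : ℝ) : HasDerivAt γ (planeField (γ t)) t := by
    have hχ : χ (γ t) = 1 := χ.one_of_mem_closedBall (mem_closedBall_zero_iff.mpr (hbox t))
    simpa [hχ] using hγ t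
  exact ⟨fun t ↦ (γ t).1, fun t ↦ (γ t).2, by simp [hγ0], by simp [hγ0],
    fun t _ ↦ ⟨(hsol t).fst, (hsol t).snd⟩, exp C, fun t _ ↦ norm_prod_le_iff.mp (hbox t)⟩
end

section
/- Let λ, D : [0, T) → ℝ be the maximal solution of the ODE system λ' = D(1 − λ), D' = −D² − λ with initial data λ(0) = λ_0, D(0) = D_0 satisfying Δ = D_0² + 2λ_0 − 1 < 0. Then the solution is defined for all t ≥ 0 (T = ∞) and λ and D are bounded on [0, ∞). -/
/-!
The substitution `q = 1 / (1 - λ)`, `D = q' / q` turns the system into the linear equation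
`q'' + q = 1`, so `q t = 1 + A cos t + B sin t` with `A = λ₀ / (1 - λ₀)`, `B = D₀ / (1 - λ₀)`.
The condition `Δ < 0` says exactly that `λ₀ < 1` and `A² + B² < 1`; then `q` stays above
`1 - √(A² + B²) > 0`, so `λ = 1 - 1 / q` and `D = q' / q` are defined and bounded for all time.
-/

open Real

namespace ColdPlasma

noncomputable def oscillation (A B t : ℝ) : ℝ := 1 + A * cos t + B * sin t

noncomputable def oscillationDeriv (A B t : ℝ) : ℝ := B * cos t - A * sin t

variable (A B : ℝ)

@[simp]
theorem oscillation_zero : oscillation A B 0 = 1 + A := by simp [oscillation]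

@[simp]
theorem oscillationDeriv_zero : oscillationDeriv A B 0 = B := by simp [oscillationDeriv]

theorem hasDerivAt_oscillation (t : ℝ) :
    HasDerivAt (oscillation A B) (oscillationDeriv A B t) t := by
  refine (((hasDerivAt_cos t).const_mul A).const_add 1).add
    ((hasDerivAt_sin t).const_mul B) |>.congr_deriv ?_
  simp only [oscillationDeriv]
  ring

theorem hasDerivAt_oscillationDeriv (t : ℝ) :
    HasDerivAt (oscillationDeriv A B) (1 - oscillation A B t) t := by
  refine ((hasDerivAt_cos t).const_mul B).sub ((hasDerivAt_sin t).const_mul A) |>.congr_deriv ?_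
  simp only [oscillation]
  ring

theorem abs_mul_cos_add_mul_sin_le (t : ℝ) : |A * cos t + B * sin t| ≤ √(A ^ 2 + B ^ 2) :=
  abs_le_sqrt <| by nlinarith [sin_sq_add_cos_sq t, sq_nonneg (A * sin t - B * cos t)]

theorem one_sub_sqrt_le_oscillation (t : ℝ) : 1 - √(A ^ 2 + B ^ 2) ≤ oscillation A B t := by
  have h := (abs_le.mp (abs_mul_cos_add_mul_sin_le A B t)).1
  simp only [oscillation]
  linarith

theorem abs_oscillationDeriv_le (t : ℝ) : |oscillationDeriv A B t| ≤ √(A ^ 2 + B ^ 2) := by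
  have h := abs_mul_cos_add_mul_sin_le A B (t + π / 2)
  rwa [cos_add_pi_div_two, sin_add_pi_div_two, mul_neg, neg_add_eq_sub] at h

end ColdPlasma

theorem hasDerivAt_coldPlasma_of_linear {q p : ℝ → ℝ} {t : ℝ} (hq : HasDerivAt q (p t) t)
    (hp : HasDerivAt p (1 - q t) t) (hq₀ : q t ≠ 0) :
    HasDerivAt (fun s ↦ 1 - (q s)⁻¹) (p t / q t * (1 - (1 - (q t)⁻¹))) t ∧
      HasDerivAt (fun s ↦ p s / q s) (-(p t / q t) ^ 2 - (1 - (q t)⁻¹)) t := by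
  constructor
  · refine (hq.inv hq₀).const_sub 1 |>.congr_deriv ?_
    field_simp
    ring
  · refine hp.div hq hq₀ |>.congr_deriv ?_
    field_simp
    ring

theorem abs_one_sub_inv_le {x ε : ℝ} (hε : 0 < ε) (hx : ε ≤ x) : |1 - x⁻¹| ≤ 1 + ε⁻¹ := by
  have h₀ : 0 < x⁻¹ := inv_pos.mpr (hε.trans_le hx)
  have h₁ : x⁻¹ ≤ ε⁻¹ := inv_anti₀ hε hx
  rw [abs_le]
  constructor <;> linarith [inv_pos.mpr hε]

theorem abs_div_le_inv {x y ε : ℝ} (hy : |y| ≤ 1) (hε : 0 < ε) (hx : ε ≤ x) :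
    |y / x| ≤ ε⁻¹ := by
  rw [abs_div, abs_of_pos (hε.trans_le hx), ← one_div]
  exact div_le_div₀ zero_le_one hy hε hx

open ColdPlasma

/-- Solutions are unique, so global existence of the maximal solution is expressed as the
existence of a globally defined bounded solution with the given initial data. -/
theorem oneD_global_bounded (lam₀ D₀ : ℝ) (hΔ : D₀ ^ 2 + 2 * lam₀ - 1 < 0) :
    ∃ lam D : ℝ → ℝ, lam 0 = lam₀ ∧ D 0 = D₀ ∧
      (∀ t : ℝ, 0 ≤ t →
        HasDerivAt lam (D t * (1 - lam t)) t ∧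
        HasDerivAt D (-(D t) ^ 2 - lam t) t) ∧
      ∃ M : ℝ, ∀ t : ℝ, 0 ≤ t → |lam t| ≤ M ∧ |D t| ≤ M := by
  have hc : 0 < 1 - lam₀ := by nlinarith [sq_nonneg D₀]
  set A := lam₀ / (1 - lam₀)
  set B := D₀ / (1 - lam₀)
  have hAB : A ^ 2 + B ^ 2 < 1 := by
    rw [div_pow, div_pow, ← add_div, div_lt_one (by positivity)]
    nlinarith
  set ρ := √(A ^ 2 + B ^ 2)
  have hρ : 0 < 1 - ρ := by
    have : ρ < 1 := (sqrt_lt' one_pos).mpr (by simpa using hAB)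
    linarith
  have hq t : 1 - ρ ≤ oscillation A B t := one_sub_sqrt_le_oscillation A B t
  have hp t : |oscillationDeriv A B t| ≤ 1 :=
    (abs_oscillationDeriv_le A B t).trans (sqrt_le_one.mpr hAB.le)
  have hq_zero : oscillation A B 0 = (1 - lam₀)⁻¹ := by
    simp only [oscillation_zero, A]
    field_simp
    ring
  refine ⟨fun t ↦ 1 - (oscillation A B t)⁻¹, fun t ↦ oscillationDeriv A B t / oscillation A B t,
    ?_, ?_, fun t _ ↦ ?_, 1 + (1 - ρ)⁻¹, fun t _ ↦ ⟨?_, ?_⟩⟩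
  · simp only [hq_zero, inv_inv, sub_sub_cancel]
  · simp only [hq_zero, oscillationDeriv_zero, B]
    field_simp
  · exact hasDerivAt_coldPlasma_of_linear (hasDerivAt_oscillation A B t)
      (hasDerivAt_oscillationDeriv A B t) (hρ.trans_le (hq t)).ne'
  · exact abs_one_sub_inv_le hρ (hq t)
  · exact (abs_div_le_inv (hp t) hρ (hq t)).trans (le_add_of_nonneg_left zero_le_one)
end

section
/- Let λ, D : [0, T) → ℝ be the maximal solution of the ODE system λ' = D(1 − λ), D' = −D² − λ with initial data λ(0) = λ_0 < 1, D(0) = D_0 satisfying Δ = D_0² + 2λ_0 − 1 > 0. Then the solution blows up in finite time: T < ∞, and D(t) → −∞ and λ(t) → −∞ as t → T⁻. -/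
/-!
Along a solution, `F = D² + 2λ − 1 − C (λ − 1)²` obeys the linear equation `F' = −2 D F`, so
`F ≡ 0` once `C` is chosen to make `F(0) = 0`. On that level curve `λ` never reaches `1` (there
`D² = −1`), and `D' = −D² − λ = −(1 + D²)/2 − C (1 − λ)²/2 ≤ −(1 + D²)/2` since `C ≥ 0`.
Comparing with the Riccati equation, `arctan D + t/2` is nonincreasing, so the lifespan is at most
`2 arctan D₀ + π`. Since `D` decreases, either it tends to `−∞`, or it has a finite limit; then so
has `λ`, a continuous function of `D` on the branch `λ < 1`, and local existence at the limit point
extends the solution, contradicting maximality. Finally `λ ≤ 1 + D/(C + 1)` on the level curve.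
-/

open Filter Set Real Topology
open scoped ENNReal

theorem eq_zero_of_hasDerivAt_eq_mul_self {F g : ℝ → ℝ} {a b : ℝ} (hab : a ≤ b)
    (hF : ∀ s ∈ Icc a b, HasDerivAt F (g s * F s) s) (hg : ContinuousOn g (Icc a b))
    (ha : F a = 0) : F b = 0 := by
  obtain ⟨K, hK⟩ := isCompact_Icc.exists_bound_of_continuousOn hg
  refine eq_zero_of_abs_deriv_le_mul_abs_self_of_eq_zero_right (K := K)
    (fun s hs => (hF s hs).continuousAt.continuousWithinAt)
    (fun s hs => (hF s (Ico_subset_Icc_self hs)).hasDerivWithinAt) ha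
    (fun s hs => ?_) b (right_mem_Icc.2 hab)
  rw [norm_mul]
  exact mul_le_mul_of_nonneg_right (hK s (Ico_subset_Icc_self hs)) (norm_nonneg _)

theorem mul_sub_lt_arctan_add_pi_div_two {D D' : ℝ → ℝ} {k a b : ℝ} (hab : a ≤ b)
    (hD : ∀ s ∈ Icc a b, HasDerivAt D (D' s) s)
    (hD' : ∀ s ∈ Icc a b, D' s ≤ -(k * (1 + D s ^ 2))) :
    k * (b - a) < arctan (D a) + π / 2 := by
  have hφ : ∀ s ∈ Icc a b,
      HasDerivAt (fun s => arctan (D s) + k * s) (1 / (1 + D s ^ 2) * D' s + k) s :=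
    fun s hs => ((hD s hs).arctan).add ((hasDerivAt_id s).const_mul k) |>.congr_deriv (by simp)
  have hanti : AntitoneOn (fun s => arctan (D s) + k * s) (Icc a b) := by
    refine antitoneOn_of_hasDerivWithinAt_nonpos (convex_Icc a b)
      (fun s hs => (hφ s hs).continuousAt.continuousWithinAt)
      (fun s hs => (hφ s (interior_subset hs)).hasDerivWithinAt) (fun s hs => ?_)
    have hpos : 0 < 1 + D s ^ 2 := by positivity
    rw [div_mul_eq_mul_div, one_mul, div_add' _ _ _ hpos.ne', div_nonpos_iff]
    exact Or.inr ⟨by linarith [hD' s (interior_subset hs)], hpos.le⟩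
  have := hanti (left_mem_Icc.2 hab) (right_mem_Icc.2 hab) hab
  linarith [neg_pi_div_two_lt_arctan (D b)]

theorem AntitoneOn.tendsto_nhdsLT_atBot {α β : Type*} [LinearOrder α] [TopologicalSpace α]
    [OrderTopology α] [LinearOrder β] {f : α → β} {a b : α} (hf : AntitoneOn f (Ioo a b))
    (hbdd : ¬ BddBelow (f '' Ioo a b)) : Tendsto f (𝓝[<] b) atBot := by
  refine tendsto_atBot.2 fun c => ?_
  obtain ⟨_, ⟨t, ht, rfl⟩, hc⟩ := not_bddBelow_iff.1 hbdd c
  filter_upwards [Ioo_mem_nhdsLT ht.2] with s hs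
  exact (hf ht ⟨ht.1.trans hs.1, hs.2⟩ hs.1.le).trans hc.le

section Extension

variable {E : Type*} [NormedAddCommGroup E] [NormedSpace ℝ E]

theorem hasDerivAt_ite_lt {f f' g : ℝ → E} {a b : ℝ} {e : E} (hab : a < b)
    (hf : ∀ t ∈ Ioo a b, HasDerivAt f (f' t) t) (hf' : Tendsto f' (𝓝[<] b) (𝓝 e))
    (hfg : Tendsto f (𝓝[<] b) (𝓝 (g b))) (hg : HasDerivAt g e b) :
    HasDerivAt (fun t => if t < b then f t else g t) e b := by
  set h := fun t => if t < b then f t else g t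
  have hIoo : Ioo a b ∈ 𝓝[<] b := Ioo_mem_nhdsLT hab
  have hf_eq : EqOn h f (Iio b) := fun t ht => if_pos ht
  have hleft : HasDerivWithinAt h e (Iic b) b := by
    refine hasDerivWithinAt_Iic_of_tendsto_deriv
      (fun t ht => ((hf t ht).congr_of_eventuallyEq
        (eventuallyEq_of_mem (Iio_mem_nhds ht.2) hf_eq)).differentiableAt.differentiableWithinAt)
      ?_ hIoo ?_
    · have : h b = g b := if_neg (lt_irrefl b)
      rw [ContinuousWithinAt, this]
      exact (hfg.mono_left (nhdsWithin_mono _ Ioo_subset_Iio_self)).congr'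
        (eventuallyEq_of_mem self_mem_nhdsWithin fun t ht => (hf_eq ht.2).symm)
    · refine hf'.congr' ?_
      filter_upwards [hIoo] with t ht
      exact ((hf t ht).congr_of_eventuallyEq
        (eventuallyEq_of_mem (Iio_mem_nhds ht.2) hf_eq)).deriv.symm
  have hright : HasDerivWithinAt h e (Ici b) b :=
    hg.hasDerivWithinAt.congr (fun t ht => if_neg (not_lt.2 ht)) (if_neg (lt_irrefl b))
  simpa using hleft.union hright

theorem exists_hasDerivAt_extension_of_tendsto [CompleteSpace E] {v : E → E} {γ : ℝ → E}
    {a b : ℝ} {p : E} (hab : a < b) (hv : ContDiffAt ℝ 1 v p)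
    (hγ : ∀ t ∈ Ico a b, HasDerivAt γ (v (γ t)) t) (hlim : Tendsto γ (𝓝[<] b) (𝓝 p)) :
    ∃ ε > 0, ∃ γ' : ℝ → E, EqOn γ' γ (Iio b) ∧ ∀ t ∈ Ico a (b + ε), HasDerivAt γ' (v (γ' t)) t := by
  obtain ⟨α, hαb, ε, hε, hα⟩ :=
    hv.exists_forall_mem_closedBall_exists_eq_forall_mem_Ioo_hasDerivAt₀ b
  set γ' : ℝ → E := fun t => if t < b then γ t else α t
  have hγ'γ : EqOn γ' γ (Iio b) := fun t ht => if_pos ht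
  have hγ'α : EqOn γ' α (Ici b) := fun t ht => if_neg (not_lt.2 ht)
  refine ⟨ε, hε, γ', hγ'γ, fun t ht => ?_⟩
  rcases lt_trichotomy t b with htb | rfl | hbt
  · rw [hγ'γ htb]
    exact (hγ t ⟨ht.1, htb⟩).congr_of_eventuallyEq (eventuallyEq_of_mem (Iio_mem_nhds htb) hγ'γ)
  · rw [hγ'α self_mem_Ici, hαb]
    refine hasDerivAt_ite_lt hab (fun s hs => hγ s (Ioo_subset_Ico_self hs))
      (hv.continuousAt.tendsto.comp hlim) (hαb ▸ hlim) ?_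
    exact hαb ▸ hα t ⟨by linarith, by linarith⟩
  · rw [hγ'α hbt.le]
    exact (hα t ⟨by linarith, ht.2⟩).congr_of_eventuallyEq
      (eventuallyEq_of_mem (Ici_mem_nhds hbt) hγ'α)

end Extension

def plasmaField (p : ℝ × ℝ) : ℝ × ℝ := (p.2 * (1 - p.1), -p.2 ^ 2 - p.1)

def SolvesPlasmaAt (lam D : ℝ → ℝ) (t : ℝ) : Prop :=
  HasDerivAt lam (D t * (1 - lam t)) t ∧ HasDerivAt D (-(D t) ^ 2 - lam t) t

/-- The level set `(D² + 2λ − 1)/(λ − 1)² = C` of the first integral, with the denominator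
cleared. -/
def OnLevelCurve (C l d : ℝ) : Prop :=
  d ^ 2 + 2 * l - 1 = C * (l - 1) ^ 2

/-- The branch `λ < 1` of the level curve, solved for `λ`: `u = 1 − λ` is the positive root of
`C u² + 2u = 1 + d²`, written so that it also covers `C = 0`. -/
noncomputable def levelBranch (C d : ℝ) : ℝ :=
  1 - (1 + d ^ 2) / (√(1 + C * (1 + d ^ 2)) + 1)

theorem contDiff_plasmaField : ContDiff ℝ 1 plasmaField :=
  (contDiff_snd.mul (contDiff_const.sub contDiff_fst)).prodMk
    ((contDiff_snd.pow 2).neg.sub contDiff_fst)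

theorem solvesPlasmaAt_iff {lam D : ℝ → ℝ} {t : ℝ} :
    SolvesPlasmaAt lam D t ↔
      HasDerivAt (fun s => (lam s, D s)) (plasmaField (lam t, D t)) t :=
  ⟨fun h => h.1.prodMk h.2, fun h =>
    ⟨hasFDerivAt_fst.comp_hasDerivAt (f := fun s => (lam s, D s)) t h,
      hasFDerivAt_snd.comp_hasDerivAt (f := fun s => (lam s, D s)) t h⟩⟩

theorem continuous_levelBranch (C : ℝ) : Continuous (levelBranch C) := by
  unfold levelBranch
  exact continuous_const.sub ((continuous_const.add (continuous_pow 2)).div (by fun_prop)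
    fun d => by positivity)

namespace OnLevelCurve

variable {C l d : ℝ}

theorem neg_sq_sub_le (hC : 0 ≤ C) (h : OnLevelCurve C l d) :
    -d ^ 2 - l ≤ -(1 / 2 * (1 + d ^ 2)) := by
  unfold OnLevelCurve at h
  nlinarith [mul_nonneg hC (sq_nonneg (l - 1))]

theorem le_one_add_div (hC : 0 ≤ C) (hl : l < 1) (h : OnLevelCurve C l d) :
    l ≤ 1 + d / (C + 1) := by
  unfold OnLevelCurve at h
  have hu : 0 < (C + 1) * (1 - l) := by nlinarith
  have hd : d ^ 2 ≤ ((C + 1) * (1 - l)) ^ 2 := by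
    nlinarith [mul_nonneg (mul_nonneg hC (by linarith : 0 ≤ C + 1)) (sq_nonneg (1 - l)),
      sq_nonneg l]
  rw [← sub_le_iff_le_add', le_div_iff₀ (by linarith)]
  nlinarith

theorem eq_levelBranch (hC : 0 ≤ C) (hl : l < 1) (h : OnLevelCurve C l d) :
    l = levelBranch C d := by
  unfold OnLevelCurve at h
  have hsqrt : √(1 + C * (1 + d ^ 2)) = C * (1 - l) + 1 := by
    rw [sqrt_eq_iff_eq_sq (by nlinarith [sq_nonneg d]) (by positivity)]
    linear_combination C * h
  rw [levelBranch, hsqrt, eq_sub_iff_add_eq, ← eq_sub_iff_add_eq', div_eq_iff (by positivity)]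
  linear_combination h

end OnLevelCurve

section Dynamics

variable {lam D : ℝ → ℝ} {C a b : ℝ}

theorem SolvesPlasmaAt.hasDerivAt_levelDefect {t : ℝ} (h : SolvesPlasmaAt lam D t) :
    HasDerivAt (fun s => D s ^ 2 + 2 * lam s - 1 - C * (lam s - 1) ^ 2)
      (-2 * D t * (D t ^ 2 + 2 * lam t - 1 - C * (lam t - 1) ^ 2)) t := by
  refine ((((h.2.pow 2).add (h.1.const_mul 2)).sub_const 1).sub
    (((h.1.sub_const 1).pow 2).const_mul C)).congr_deriv ?_
  ring

theorem OnLevelCurve.of_solvesPlasmaAt (hab : a ≤ b)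
    (hsol : ∀ s ∈ Icc a b, SolvesPlasmaAt lam D s) (ha : OnLevelCurve C (lam a) (D a)) :
    OnLevelCurve C (lam b) (D b) := by
  refine sub_eq_zero.1 (eq_zero_of_hasDerivAt_eq_mul_self
    (F := fun s => D s ^ 2 + 2 * lam s - 1 - C * (lam s - 1) ^ 2) hab
    (fun s hs => (hsol s hs).hasDerivAt_levelDefect) ?_ (sub_eq_zero.2 ha))
  exact fun s hs => (continuousAt_const.mul (hsol s hs).2.continuousAt).continuousWithinAt

theorem lt_one_of_onLevelCurve (hab : a ≤ b) (hlam : ContinuousOn lam (Icc a b))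
    (hlev : ∀ s ∈ Icc a b, OnLevelCurve C (lam s) (D s)) (ha : lam a < 1) : lam b < 1 := by
  by_contra! hb
  obtain ⟨s, hs, hs1⟩ := intermediate_value_Icc hab hlam ⟨ha.le, hb⟩
  have := hlev s hs
  rw [OnLevelCurve, hs1] at this
  nlinarith [sq_nonneg (D s)]

theorem lt_two_mul_arctan_add_pi (hC : 0 ≤ C) {t : ℝ} (ht : 0 ≤ t)
    (hsol : ∀ s ∈ Icc 0 t, SolvesPlasmaAt lam D s) (h0 : OnLevelCurve C (lam 0) (D 0)) :
    t < 2 * arctan (D 0) + π := by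
  have := mul_sub_lt_arctan_add_pi_div_two (k := 1 / 2) ht (fun s hs => (hsol s hs).2)
    fun s hs =>
      (h0.of_solvesPlasmaAt hs.1 fun r hr => hsol r ⟨hr.1, hr.2.trans hs.2⟩).neg_sq_sub_le hC
  linarith

theorem exists_solvesPlasmaAt_extension {l d : ℝ} (hb : 0 < b)
    (hsol : ∀ t ∈ Ico 0 b, SolvesPlasmaAt lam D t)
    (hlam : Tendsto lam (𝓝[<] b) (𝓝 l)) (hD : Tendsto D (𝓝[<] b) (𝓝 d)) :
    ∃ ε > 0, ∃ lam' D' : ℝ → ℝ, lam' 0 = lam 0 ∧ D' 0 = D 0 ∧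
      ∀ t ∈ Ico 0 (b + ε), SolvesPlasmaAt lam' D' t := by
  obtain ⟨ε, hε, γ, hγ, hsolγ⟩ := exists_hasDerivAt_extension_of_tendsto hb
    contDiff_plasmaField.contDiffAt (fun t ht => solvesPlasmaAt_iff.1 (hsol t ht))
    (hlam.prodMk_nhds hD)
  exact ⟨ε, hε, fun t => (γ t).1, fun t => (γ t).2, congrArg Prod.fst (hγ hb),
    congrArg Prod.snd (hγ hb), fun t ht => solvesPlasmaAt_iff.2 (hsolγ t ht)⟩

theorem tendsto_atBot_of_not_extendable (hC : 0 ≤ C) (hb : 0 < b)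
    (hsol : ∀ t ∈ Ico 0 b, SolvesPlasmaAt lam D t) (h0 : OnLevelCurve C (lam 0) (D 0))
    (hlam0 : lam 0 < 1)
    (hmax : ¬ ∃ ε > 0, ∃ lam' D' : ℝ → ℝ, lam' 0 = lam 0 ∧ D' 0 = D 0 ∧
      ∀ t ∈ Ico 0 (b + ε), SolvesPlasmaAt lam' D' t) :
    Tendsto lam (𝓝[<] b) atBot ∧ Tendsto D (𝓝[<] b) atBot := by
  have hsol_Icc : ∀ t ∈ Ico 0 b, ∀ s ∈ Icc 0 t, SolvesPlasmaAt lam D s :=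
    fun t ht s hs => hsol s ⟨hs.1, hs.2.trans_lt ht.2⟩
  have hlev : ∀ t ∈ Ico 0 b, OnLevelCurve C (lam t) (D t) :=
    fun t ht => h0.of_solvesPlasmaAt ht.1 (hsol_Icc t ht)
  have hlt : ∀ t ∈ Ico 0 b, lam t < 1 := fun t ht =>
    lt_one_of_onLevelCurve ht.1
      (fun s hs => (hsol_Icc t ht s hs).1.continuousAt.continuousWithinAt)
      (fun s hs => hlev s ⟨hs.1, hs.2.trans_lt ht.2⟩) hlam0
  have hIoo : Ioo 0 b ∈ 𝓝[<] b := Ioo_mem_nhdsLT hb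
  have hanti : AntitoneOn D (Ioo 0 b) := by
    refine antitoneOn_of_hasDerivWithinAt_nonpos (convex_Ioo 0 b)
      (fun t ht => (hsol t (Ioo_subset_Ico_self ht)).2.continuousAt.continuousWithinAt)
      (fun t ht => (hsol t (Ioo_subset_Ico_self (interior_subset ht))).2.hasDerivWithinAt)
      fun t ht => ?_
    have := (hlev t (Ioo_subset_Ico_self (interior_subset ht))).neg_sq_sub_le hC
    nlinarith [sq_nonneg (D t)]
  have hD : Tendsto D (𝓝[<] b) atBot := by
    -- a bounded `D` converges, hence so does `λ = levelBranch C D`, and the solution extends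
    refine hanti.tendsto_nhdsLT_atBot fun hbdd => hmax ?_
    have hDlim := hanti.tendsto_nhdsWithin_Ioo_left ⟨b / 2, by constructor <;> linarith⟩ hbdd
    refine exists_solvesPlasmaAt_extension hb hsol
      (((continuous_levelBranch C).tendsto _).comp hDlim |>.congr' ?_) hDlim
    filter_upwards [hIoo] with t ht
    have ht' := Ioo_subset_Ico_self ht
    exact ((hlev t ht').eq_levelBranch hC (hlt t ht')).symm
  refine ⟨tendsto_atBot_mono' _ ?_ (tendsto_atBot_add_const_left _ 1
    (hD.atBot_div_const (by linarith : 0 < C + 1))), hD⟩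
  filter_upwards [hIoo] with t ht
  exact (hlev t (Ioo_subset_Ico_self ht)).le_one_add_div hC (hlt t (Ioo_subset_Ico_self ht))

end Dynamics

/-- 1D oscillations, blow-up direction of the criterion: let `(λ, D)` be the
maximal solution of `λ' = D(1 − λ)`, `D' = −D² − λ` on `[0, T)` (with
`T ∈ (0, ∞]`, maximality meaning that no solution with the same initial data
exists on a strictly longer interval) with `λ(0) = λ₀ < 1` and
`Δ = D₀² + 2λ₀ − 1 > 0`. Then `T` is finite and `λ(t) → −∞`, `D(t) → −∞`
as `t → T⁻`. -/
theorem oneD_blow_up (lam₀ D₀ : ℝ) (hlam₀ : lam₀ < 1)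
    (hΔ : 0 < D₀ ^ 2 + 2 * lam₀ - 1)
    (T : ℝ≥0∞) (hT : 0 < T) (lam D : ℝ → ℝ)
    (hlam0 : lam 0 = lam₀) (hD0 : D 0 = D₀)
    (hsol : ∀ t : ℝ, 0 ≤ t → ENNReal.ofReal t < T →
      HasDerivAt lam (D t * (1 - lam t)) t ∧
      HasDerivAt D (-(D t) ^ 2 - lam t) t)
    (hmax : ∀ T' : ℝ≥0∞, T < T' →
      ¬ ∃ lam' D' : ℝ → ℝ, lam' 0 = lam₀ ∧ D' 0 = D₀ ∧
          ∀ t : ℝ, 0 ≤ t → ENNReal.ofReal t < T' →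
            HasDerivAt lam' (D' t * (1 - lam' t)) t ∧
            HasDerivAt D' (-(D' t) ^ 2 - lam' t) t) :
    ∃ Tr : ℝ, 0 < Tr ∧ T = ENNReal.ofReal Tr ∧
      Tendsto lam (nhdsWithin Tr (Set.Iio Tr)) atBot ∧
      Tendsto D (nhdsWithin Tr (Set.Iio Tr)) atBot := by
  set C := (D₀ ^ 2 + 2 * lam₀ - 1) / (lam₀ - 1) ^ 2
  have hC : 0 ≤ C := div_nonneg hΔ.le (sq_nonneg _)
  have h0 : OnLevelCurve C (lam 0) (D 0) := by
    rw [OnLevelCurve, hlam0, hD0, div_mul_cancel₀ _ (pow_ne_zero 2 (sub_ne_zero.2 hlam₀.ne))]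
  have hT_ne_top : T ≠ ⊤ := by
    rintro rfl
    have ht : 0 ≤ 2 * arctan (D 0) + π := by linarith [neg_pi_div_two_lt_arctan (D 0)]
    exact (lt_two_mul_arctan_add_pi hC ht (fun s hs => hsol s hs.1 ENNReal.ofReal_lt_top) h0).false
  obtain ⟨b, hb, rfl⟩ : ∃ b : ℝ, 0 < b ∧ T = ENNReal.ofReal b :=
    ⟨T.toReal, ENNReal.toReal_pos hT.ne' hT_ne_top, (ENNReal.ofReal_toReal hT_ne_top).symm⟩
  refine ⟨b, hb, rfl, tendsto_atBot_of_not_extendable hC hb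
    (fun t ht => hsol t ht.1 (ENNReal.ofReal_lt_ofReal_iff hb |>.2 ht.2)) h0 (hlam0 ▸ hlam₀) ?_⟩
  rintro ⟨ε, hε, lam', D', hlam', hD', hsol'⟩
  refine hmax (ENNReal.ofReal (b + ε))
    (ENNReal.ofReal_lt_ofReal_iff (by linarith) |>.2 (by linarith))
    ⟨lam', D', hlam'.trans hlam0, hD'.trans hD0, fun t ht htb => hsol' t ⟨ht, ?_⟩⟩
  exact (ENNReal.ofReal_lt_ofReal_iff' |>.1 htb).1
end

section
/- Let λ_0 ∈ (0, 1) and let F, G be the maximal solution of the planar ODE system F' = −F² − G, G' = F(1 − 2G) with initial data F(0) = 0, G(0) = λ_0/2. Set C = 1/(λ_0 − 1) − ln((1 − λ_0)/2). Then e^{−C−1} ≥ 1/2 and the supremum of F(t)² over the trajectory equals e^{−C−1} − 1/2; that is, the maximal value F₊ of |F| is F₊ = (1/2)√(4 e^{−C−1} − 2). -/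
/-!
With `u = 1 - 2G`, the quantity `(2F² + 1)/u + log u` is conserved while `u > 0`, and its level
sets stay away from `u = 0`, so it is conserved for all time. On the level `C₂ = 1/u(0) + log u(0)`
this reads `2F² = u (C₂ - log u) - 1`, a function of `u` whose maximum `e^{C₂-1} - 1` is taken
only at `u = e^{C₂-1}`; and `e^{-C-1} = e^{C₂-1}/2`. The maximum is attained: since
`F'(0) = -G(0) < 0`, `F` stays negative as long as `u < e^{C₂-1}` (a zero of `F` would put `u` at
a second root of the profile below its maximum), so `u` increases, and then at a rate bounded
below, hence reaches `e^{C₂-1}`.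
-/

open Real Set Filter Topology

lemma exists_first_zero {f : ℝ → ℝ} {a b : ℝ} (hab : a ≤ b) (hf : ContinuousOn f (Icc a b))
    (ha : 0 < f a) (hb : f b ≤ 0) : ∃ c ∈ Ioc a b, f c = 0 ∧ ∀ x ∈ Ico a c, 0 < f x := by
  have hS : IsCompact (Icc a b ∩ f ⁻¹' Iic 0) :=
    isCompact_Icc.of_isClosed_subset (hf.preimage_isClosed_of_isClosed isClosed_Icc isClosed_Iic)
      inter_subset_left
  obtain ⟨c, ⟨⟨hac, hcb⟩, hc⟩, hmin⟩ := hS.exists_isLeast ⟨b, ⟨hab, le_rfl⟩, hb⟩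
  have hpos : ∀ x ∈ Ico a c, 0 < f x := fun x hx => by
    by_contra! hx'
    exact hx.2.not_ge (hmin ⟨⟨hx.1, hx.2.le.trans hcb⟩, hx'⟩)
  obtain ⟨x, hx, hfx⟩ :=
    intermediate_value_Icc' hac (hf.mono (Icc_subset_Icc_right hcb)) ⟨hc, ha.le⟩
  have hxc : x = c := hx.2.eq_or_lt.resolve_right fun h => (hpos x ⟨hx.1, h⟩).ne' hfx
  refine ⟨c, ⟨hac.lt_of_ne ?_, hcb⟩, hxc ▸ hfx, hpos⟩
  rintro rfl
  exact (hc.trans_lt ha).false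

lemma eventually_neg_nhdsGT_of_hasDerivAt {f : ℝ → ℝ} {f' a : ℝ} (hf : HasDerivAt f f' a)
    (hfa : f a = 0) (hf' : f' < 0) : ∀ᶠ x in 𝓝[>] a, f x < 0 := by
  have hslope := (hf.hasDerivWithinAt (s := Ioi a)).limsup_slope_le hf'
  rw [show Ioi a \ {a} = Ioi a by simp] at hslope
  filter_upwards [hslope, self_mem_nhdsWithin] with x hx (hax : a < x)
  rw [slope_def_field, hfa, sub_zero, div_neg_iff] at hx
  rcases hx with ⟨-, h⟩ | ⟨h, -⟩
  · linarith
  · exact h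

lemma exists_lt_of_hasDerivAt_ge {f f' : ℝ → ℝ} {a κ : ℝ} (hκ : 0 < κ)
    (hf : ∀ x, a ≤ x → HasDerivAt f (f' x) x) (hf' : ∀ x, a ≤ x → κ ≤ f' x) (M : ℝ) :
    ∃ x, a ≤ x ∧ M < f x := by
  have hgrowth := (convex_Ici a).mul_sub_le_image_sub_of_le_deriv
    (fun x hx => (hf x hx).continuousAt.continuousWithinAt)
    (fun x hx => (hf x (interior_subset hx)).differentiableAt.differentiableWithinAt)
    (fun x hx => (hf x (interior_subset hx)).deriv ▸ hf' x (interior_subset hx))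
  set x := a + (|M - f a| + 1) / κ
  have hax : a ≤ x := le_add_of_nonneg_right (by positivity)
  refine ⟨x, hax, ?_⟩
  have := hgrowth a (mem_Ici.2 le_rfl) x hax hax
  rw [add_sub_cancel_left, mul_div_cancel₀ _ hκ.ne'] at this
  linarith [le_abs_self (M - f a)]

lemma tendsto_inv_add_log_nhdsGT_zero : Tendsto (fun x : ℝ => x⁻¹ + log x) (𝓝[>] 0) atTop := by
  have h : Tendsto (fun x : ℝ => 1 + log x * x) (𝓝[>] 0) (𝓝 1) := by
    simpa using (tendsto_log_mul_rpow_nhdsGT_zero one_pos).const_add 1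
  refine (tendsto_inv_nhdsGT_zero.atTop_mul_pos one_pos h).congr' ?_
  filter_upwards [self_mem_nhdsWithin] with x (hx : 0 < x)
  field_simp

/-- For `x = 1 - 2G > 0` this is the constant `C₂` of the first integral
`2F² = -(1 - 2G) ln (1 - 2G) + C₂ (1 - 2G) - 1`, solved for `C₂`. -/
noncomputable def firstIntegral (f x : ℝ) : ℝ := (2 * f ^ 2 + 1) / x + log x

noncomputable def orbitProfile (c x : ℝ) : ℝ := x * (c - log x) - 1

lemma exists_lt_firstIntegral (c : ℝ) {s : ℝ} (hs : 0 < s) :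
    ∃ v ∈ Ioo 0 s, ∀ f, c < firstIntegral f v := by
  obtain ⟨v, hv, hvs⟩ :=
    ((tendsto_inv_add_log_nhdsGT_zero.eventually_gt_atTop c).and (Ioo_mem_nhdsGT hs)).exists
  refine ⟨v, hvs, fun f => hv.trans_le ?_⟩
  have : 0 ≤ 2 * f ^ 2 / v := div_nonneg (by positivity) hvs.1.le
  rw [firstIntegral, add_div, ← one_div]
  linarith

lemma two_mul_sq_eq_orbitProfile {f x c : ℝ} (hx : 0 < x) (h : firstIntegral f x = c) :
    2 * f ^ 2 = orbitProfile c x := by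
  subst h
  rw [firstIntegral, orbitProfile]
  field_simp
  ring

lemma hasDerivAt_orbitProfile (c : ℝ) {x : ℝ} (hx : 0 < x) :
    HasDerivAt (orbitProfile c) (c - log x - 1) x := by
  refine (((hasDerivAt_id' x).mul ((hasDerivAt_log hx.ne').const_sub c)).sub_const 1).congr_deriv
    ?_
  field_simp
  ring

lemma orbitProfile_le (c : ℝ) {x : ℝ} (hx : 0 < x) : orbitProfile c x ≤ exp (c - 1) - 1 := by
  have h := add_one_le_exp (c - 1 - log x)
  rw [exp_sub, exp_log hx, le_div_iff₀ hx] at h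
  rw [orbitProfile]
  linarith

lemma orbitProfile_exp (c : ℝ) : orbitProfile c (exp (c - 1)) = exp (c - 1) - 1 := by
  rw [orbitProfile, log_exp]
  ring

lemma strictMonoOn_orbitProfile (c : ℝ) : StrictMonoOn (orbitProfile c) (Ioc 0 (exp (c - 1))) := by
  refine strictMonoOn_of_deriv_pos (convex_Ioc _ _)
    (fun x hx => (hasDerivAt_orbitProfile c hx.1).continuousAt.continuousWithinAt) ?_
  rw [interior_Ioc]
  intro x hx
  rw [(hasDerivAt_orbitProfile c hx.1).deriv, sub_pos, lt_sub_comm, ← log_exp (c - 1)]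
  exact log_lt_log hx.1 hx.2

lemma lt_exp_firstIntegral_zero {s : ℝ} (hs0 : 0 < s) (hs1 : s < 1) :
    s < exp (firstIntegral 0 s - 1) := by
  have : 1 < 1 / s := one_lt_one_div hs0 hs1
  calc s = exp (log s) := (exp_log hs0).symm
    _ < exp (firstIntegral 0 s - 1) :=
      exp_lt_exp.2 (by rw [firstIntegral]; norm_num at *; linarith)

/-- The radial system forward in time from `t = 0`, with `u = 1 - 2G` in place of `G`. -/
def IsRadialSolution (F u : ℝ → ℝ) : Prop :=
  ∀ t, 0 ≤ t → HasDerivAt F (-(F t) ^ 2 - (1 - u t) / 2) t ∧ HasDerivAt u (-2 * F t * u t) t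

namespace IsRadialSolution

variable {F u : ℝ → ℝ}

lemma continuousOn_F (h : IsRadialSolution F u) : ContinuousOn F (Ici 0) :=
  fun t ht => (h t ht).1.continuousAt.continuousWithinAt

lemma continuousOn_u (h : IsRadialSolution F u) : ContinuousOn u (Ici 0) :=
  fun t ht => (h t ht).2.continuousAt.continuousWithinAt

lemma hasDerivAt_firstIntegral (h : IsRadialSolution F u) {t : ℝ} (ht : 0 ≤ t) (hu : 0 < u t) :
    HasDerivAt (fun t => firstIntegral (F t) (u t)) 0 t := by
  obtain ⟨hF', hu'⟩ := h t ht
  refine ((((hF'.pow 2).const_mul 2).add_const 1).div hu' hu.ne' |>.add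
    ((hasDerivAt_log hu.ne').comp t hu')).congr_deriv ?_
  simp only [Pi.pow_apply]
  field_simp
  ring

lemma firstIntegral_eq_of_pos (h : IsRadialSolution F u) {b : ℝ} (hb : 0 ≤ b)
    (hpos : ∀ x ∈ Icc 0 b, 0 < u x) :
    firstIntegral (F b) (u b) = firstIntegral (F 0) (u 0) :=
  constant_of_has_deriv_right_zero
    (fun x hx => (h.hasDerivAt_firstIntegral hx.1 (hpos x hx)).continuousAt.continuousWithinAt)
    (fun x hx => (h.hasDerivAt_firstIntegral hx.1
      (hpos x (Ico_subset_Icc_self hx))).hasDerivWithinAt) b ⟨hb, le_rfl⟩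

lemma u_pos (h : IsRadialSolution F u) (h0 : 0 < u 0) {t : ℝ} (ht : 0 ≤ t) : 0 < u t := by
  obtain ⟨v, ⟨hv0, hvu⟩, hv⟩ := exists_lt_firstIntegral (firstIntegral (F 0) (u 0)) h0
  by_contra! hut
  obtain ⟨c, ⟨hc0, -⟩, hcv, hgt⟩ := exists_first_zero (f := fun x => u x - v) ht
    ((h.continuousOn_u.mono Icc_subset_Ici_self).sub continuousOn_const)
    (sub_pos.2 hvu) (by linarith)
  have hpos : ∀ x ∈ Icc 0 c, 0 < u x := fun x hx => by
    rcases hx.2.lt_or_eq with hxc | rfl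
    · linarith [hgt x ⟨hx.1, hxc⟩]
    · linarith
  have := hv (F c)
  rw [← sub_eq_zero.1 hcv, h.firstIntegral_eq_of_pos hc0.le hpos] at this
  exact this.false

lemma two_mul_sq_eq (h : IsRadialSolution F u) (h0 : 0 < u 0) {t : ℝ} (ht : 0 ≤ t) :
    2 * F t ^ 2 = orbitProfile (firstIntegral (F 0) (u 0)) (u t) :=
  two_mul_sq_eq_orbitProfile (h.u_pos h0 ht)
    (h.firstIntegral_eq_of_pos ht fun _ hx => h.u_pos h0 hx.1)

lemma strictMonoOn_u (h : IsRadialSolution F u) (h0 : 0 < u 0) {D : Set ℝ} (hD : Convex ℝ D)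
    (hD0 : D ⊆ Ici 0) (hneg : ∀ x ∈ interior D, F x < 0) : StrictMonoOn u D :=
  strictMonoOn_of_deriv_pos hD (h.continuousOn_u.mono hD0) fun x hx => by
    have hx0 : 0 ≤ x := hD0 (interior_subset hx)
    rw [(h x hx0).2.deriv]
    nlinarith [hneg x hx, h.u_pos h0 hx0]

lemma F_neg_of_le_exp (h : IsRadialSolution F u) (hF0 : F 0 = 0) (h0 : 0 < u 0) (h1 : u 0 < 1)
    (hle : ∀ t, 0 ≤ t → u t ≤ exp (firstIntegral (F 0) (u 0) - 1)) {t : ℝ} (ht : 0 < t) :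
    F t < 0 := by
  have hF' : HasDerivAt F (-((1 - u 0) / 2)) 0 := by
    simpa [hF0] using (h 0 le_rfl).1
  obtain ⟨ε, hε : 0 < ε, hsub⟩ := mem_nhdsGT_iff_exists_Ioo_subset.1
    (eventually_neg_nhdsGT_of_hasDerivAt hF' hF0 (by linarith))
  by_contra! hFt
  have hεt : ε ≤ t := not_lt.1 fun htε => (hsub ⟨ht, htε⟩ : F t < 0).not_ge hFt
  have hFε : F (ε / 2) < 0 := hsub ⟨by positivity, by linarith⟩
  obtain ⟨c, ⟨hεc, -⟩, hFc, hgt⟩ := exists_first_zero (f := fun x => -F x) (a := ε / 2)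
    (by linarith) (h.continuousOn_F.mono (Icc_subset_Ici_self.trans
      (Ici_subset_Ici.2 (by positivity)))).neg (neg_pos.2 hFε) (neg_nonpos.2 hFt)
  have hc0 : 0 < c := by linarith
  have hneg : ∀ x ∈ Ioo 0 c, F x < 0 := fun x hx => by
    rcases lt_or_ge x (ε / 2) with hxε | hxε
    · exact hsub ⟨hx.1, by linarith⟩
    · exact neg_pos.1 (hgt x ⟨hxε, hx.2⟩)
  have hu : u 0 < u c := h.strictMonoOn_u h0 (convex_Icc 0 c) Icc_subset_Ici_self
    (by rwa [interior_Icc]) ⟨le_rfl, hc0.le⟩ ⟨hc0.le, le_rfl⟩ hc0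
  have := strictMonoOn_orbitProfile _ ⟨h0, (hle 0 le_rfl)⟩
    ⟨h.u_pos h0 hc0.le, hle c hc0.le⟩ hu
  rw [← h.two_mul_sq_eq h0 le_rfl, ← h.two_mul_sq_eq h0 hc0.le, hF0, neg_eq_zero.1 hFc] at this
  exact this.false

lemma exists_u_eq_exp (h : IsRadialSolution F u) (hF0 : F 0 = 0) (h0 : 0 < u 0) (h1 : u 0 < 1) :
    ∃ t, 0 ≤ t ∧ u t = exp (firstIntegral (F 0) (u 0) - 1) := by
  set c := firstIntegral (F 0) (u 0)
  have hu0 : u 0 < exp (c - 1) := by simpa only [c, hF0] using lt_exp_firstIntegral_zero h0 h1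
  suffices ∃ t, 0 ≤ t ∧ exp (c - 1) ≤ u t by
    obtain ⟨t, ht, hut⟩ := this
    obtain ⟨t', ht', hut'⟩ :=
      intermediate_value_Icc ht (h.continuousOn_u.mono Icc_subset_Ici_self) ⟨hu0.le, hut⟩
    exact ⟨t', ht'.1, hut'⟩
  by_contra! hlt
  have hneg : ∀ t, 0 < t → F t < 0 :=
    fun t => h.F_neg_of_le_exp hF0 h0 h1 fun t ht => (hlt t ht).le
  have hmono : StrictMonoOn u (Ici 0) :=
    h.strictMonoOn_u h0 (convex_Ici 0) subset_rfl (by rw [interior_Ici]; exact hneg)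
  -- Past `t = 1`, `F` is bounded away from `0`, so `u` grows at a linear rate.
  have hu1 : u 0 < u 1 := hmono (mem_Ici.2 le_rfl) (mem_Ici.2 zero_le_one) one_pos
  have hu1t : ∀ t, 1 ≤ t → u 1 ≤ u t := fun t ht =>
    hmono.monotoneOn (mem_Ici.2 zero_le_one) (mem_Ici.2 (zero_le_one.trans ht)) ht
  set r := sqrt (orbitProfile c (u 1) / 2)
  have hr : 0 < r := by
    have :=
      strictMonoOn_orbitProfile c ⟨h0, hu0.le⟩ ⟨h0.trans hu1, (hlt 1 zero_le_one).le⟩ hu1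
    rw [← h.two_mul_sq_eq h0 le_rfl, hF0] at this
    exact sqrt_pos.2 (by linarith)
  have hFr : ∀ t, 1 ≤ t → r ≤ -F t := fun t ht => by
    have ht0 : (0:ℝ) ≤ t := zero_le_one.trans ht
    have hφ := (strictMonoOn_orbitProfile c).monotoneOn ⟨h0.trans hu1, (hlt 1 zero_le_one).le⟩
      ⟨h.u_pos h0 ht0, (hlt t ht0).le⟩ (hu1t t ht)
    rw [← h.two_mul_sq_eq h0 ht0] at hφ
    calc r ≤ sqrt (F t ^ 2) := sqrt_le_sqrt (by linarith)
      _ = -F t := by rw [sqrt_sq_eq_abs, abs_of_neg (hneg t (zero_lt_one.trans_le ht))]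
  obtain ⟨t, ht, hut⟩ := exists_lt_of_hasDerivAt_ge (f := u) (a := 1) (κ := 2 * r * u 1)
    (by have := h0.trans hu1; positivity) (fun t ht => (h t (zero_le_one.trans ht)).2)
    (fun t ht => by nlinarith [hFr t ht, hu1t t ht, h0.trans hu1]) (exp (c - 1))
  exact (hut.trans (hlt t (zero_le_one.trans ht))).false

lemma exists_max_sq_eq (h : IsRadialSolution F u) (hF0 : F 0 = 0) (h0 : 0 < u 0) (h1 : u 0 < 1) :
    ∃ t₀, 0 ≤ t₀ ∧ 2 * F t₀ ^ 2 = exp (firstIntegral (F 0) (u 0) - 1) - 1 ∧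
      ∀ t, 0 ≤ t → F t ^ 2 ≤ F t₀ ^ 2 := by
  obtain ⟨t₀, ht₀, hut₀⟩ := h.exists_u_eq_exp hF0 h0 h1
  have hF₀ : 2 * F t₀ ^ 2 = exp (firstIntegral (F 0) (u 0) - 1) - 1 := by
    rw [h.two_mul_sq_eq h0 ht₀, hut₀, orbitProfile_exp]
  refine ⟨t₀, ht₀, hF₀, fun t ht => ?_⟩
  have := orbitProfile_le (firstIntegral (F 0) (u 0)) (h.u_pos h0 ht)
  rw [← h.two_mul_sq_eq h0 ht] at this
  linarith

end IsRadialSolution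

/-- For the plane radially symmetric system `F' = −F² − G`, `G' = F(1 − 2G)`
with initial data `F(0) = 0`, `G(0) = λ₀/2`, `λ₀ ∈ (0, 1)` (the maximal
solution is then global), setting `C = 1/(λ₀ − 1) − ln((1 − λ₀)/2)`, one has
`e^{−C−1} ≥ 1/2`, the supremum of `F(t)²` over the trajectory equals
`e^{−C−1} − 1/2`, and the maximal value of `|F|` is
`F₊ = (1/2)√(4 e^{−C−1} − 2)`. -/
theorem laser_pulse_F_plus (lam₀ : ℝ) (h0 : 0 < lam₀) (h1 : lam₀ < 1)
    (F G : ℝ → ℝ) (hF0 : F 0 = 0) (hG0 : G 0 = lam₀ / 2)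
    (hsol : ∀ t : ℝ, 0 ≤ t →
      HasDerivAt F (-(F t) ^ 2 - G t) t ∧
      HasDerivAt G (F t * (1 - 2 * G t)) t)
    (C : ℝ) (hC : C = 1 / (lam₀ - 1) - Real.log ((1 - lam₀) / 2)) :
    1 / 2 ≤ Real.exp (-C - 1) ∧
    IsLUB {y : ℝ | ∃ t : ℝ, 0 ≤ t ∧ y = (F t) ^ 2} (Real.exp (-C - 1) - 1 / 2) ∧
    IsLUB {y : ℝ | ∃ t : ℝ, 0 ≤ t ∧ y = |F t|}
      ((1 / 2) * Real.sqrt (4 * Real.exp (-C - 1) - 2)) := by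
  set u : ℝ → ℝ := fun t => 1 - 2 * G t
  have hrad : IsRadialSolution F u := fun t ht =>
    ⟨(hsol t ht).1.congr_deriv (by ring),
      (((hsol t ht).2.const_mul 2).const_sub 1).congr_deriv (by ring)⟩
  have hu0 : u 0 = 1 - lam₀ := by simp only [u, hG0]; ring
  obtain ⟨t₀, ht₀, hF₀, hmax⟩ := hrad.exists_max_sq_eq hF0 (by linarith) (by linarith)
  have hexp : exp (-C - 1) = exp (firstIntegral (F 0) (u 0) - 1) / 2 := by
    rw [show -C - 1 = firstIntegral (F 0) (u 0) - 1 - log 2 by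
      rw [hC, hF0, hu0, log_div (by linarith) two_ne_zero, firstIntegral, ← neg_sub 1 lam₀,
        div_neg]
      ring, exp_sub, exp_log two_pos]
  have hF₀' : F t₀ ^ 2 = exp (-C - 1) - 1 / 2 := by rw [hexp]; linarith
  have hsq : IsGreatest {y : ℝ | ∃ t : ℝ, 0 ≤ t ∧ y = (F t) ^ 2} (F t₀ ^ 2) :=
    ⟨⟨t₀, ht₀, rfl⟩, by rintro _ ⟨t, ht, rfl⟩; exact hmax t ht⟩
  have habs : IsGreatest {y : ℝ | ∃ t : ℝ, 0 ≤ t ∧ y = |F t|} |F t₀| :=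
    ⟨⟨t₀, ht₀, rfl⟩, by rintro _ ⟨t, ht, rfl⟩; exact sq_le_sq.1 (hmax t ht)⟩
  refine ⟨by nlinarith [sq_nonneg (F t₀)], hF₀' ▸ hsq.isLUB, ?_⟩
  have hM : 1 / 2 * sqrt (4 * exp (-C - 1) - 2) = |F t₀| := by
    rw [show 4 * exp (-C - 1) - 2 = 2 ^ 2 * F t₀ ^ 2 by rw [hF₀']; ring,
      sqrt_mul (by positivity), sqrt_sq two_pos.le, sqrt_sq_eq_abs]
    ring
  exact hM ▸ habs.isLUB
end
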